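/- arXiv:2205.08509 — 2 statements merged into one kernel-verified Lean document; each statement's English description precedes it below -/
import Mathlib

section
/- For every a > 0 and every s > 0, the Laplace transform of the function t ↦ E[exp(−a E_t)] exists and is given by ∫_0^∞ e^{−st} E[exp(−a E_t)] dt = φ(s) / (s (φ(s) + a)). -/
/-!
Along a strictly increasing path `u ↦ D u`, the set `{u > 0 | t < D u}` is an interval starting
at `E t`, so `exp (-a E t) = a ∫₀^∞ exp (-a u) 1{t < D u} du`. Multiplying by `exp (-s t)` and
integrating in `t` and `ω`, Fubini's theorem (integrating in `t` first) turns the left-hand side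
into `(a / s) ∫₀^∞ exp (-a u) (1 - E[exp (-s D u)]) du`, that is
`(a / s) ∫₀^∞ exp (-a u) (1 - exp (-u φ s)) du = φ s / (s (φ s + a))`.

Fubini needs `D` to be jointly measurable in `(u, ω)`. By right-continuity, `D` agrees almost
surely with the liminf of `D` along the grid points `⌈u (n + 1)⌉ / (n + 1) ↓ u`, which is jointly
measurable since each grid approximation takes countably many values.
-/

open MeasureTheory Filter Set Topology

noncomputable def gridCeil (n : ℕ) (u : ℝ) : ℝ := ⌈u * (n + 1)⌉ / (n + 1)

lemma le_gridCeil (n : ℕ) (u : ℝ) : u ≤ gridCeil n u := by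
  rw [gridCeil, le_div_iff₀ (by positivity)]
  exact Int.le_ceil _

lemma gridCeil_lt (n : ℕ) (u : ℝ) : gridCeil n u < u + 1 / (n + 1) := by
  rw [gridCeil, div_lt_iff₀ (by positivity), add_mul, one_div_mul_cancel (by positivity)]
  exact Int.ceil_lt_add_one _

lemma tendsto_gridCeil (u : ℝ) : Tendsto (gridCeil · u) atTop (𝓝[≥] u) := by
  refine tendsto_nhdsWithin_iff.2 ⟨?_, Eventually.of_forall (le_gridCeil · u)⟩
  have h := tendsto_one_div_add_atTop_nhds_zero_nat.const_add u
  rw [add_zero] at h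
  exact tendsto_of_tendsto_of_tendsto_of_le_of_le tendsto_const_nhds h (le_gridCeil · u)
    fun n => (gridCeil_lt n u).le

section RightRegularization

variable {β : Type*} {X : ℝ → β → ℝ}

lemma measurable_gridCeil_comp [MeasurableSpace β] (hX : ∀ u, Measurable (X u)) (n : ℕ) :
    Measurable fun p : ℝ × β => X (gridCeil n p.1) p.2 := by
  have hgrid : Measurable fun p : β × ℤ => X (p.2 / (n + 1)) p.1 :=
    measurable_from_prod_countable_left fun k => hX (k / (n + 1))
  exact hgrid.comp (measurable_snd.prodMk (measurable_fst.mul_const _).ceil)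

noncomputable def rightRegularization (X : ℝ → β → ℝ) (p : ℝ × β) : ℝ :=
  liminf (fun n => X (gridCeil n p.1) p.2) atTop

lemma measurable_rightRegularization [MeasurableSpace β] (hX : ∀ u, Measurable (X u)) :
    Measurable (rightRegularization X) :=
  Measurable.liminf (measurable_gridCeil_comp hX)

lemma rightRegularization_eq {u : ℝ} {b : β} (h : ContinuousWithinAt (X · b) (Ici u) u) :
    rightRegularization X (u, b) = X u b :=
  (h.tendsto.comp (tendsto_gridCeil u)).liminf_eq

lemma rightRegularization_nonneg {b : β} (h : ∀ u, 0 ≤ X u b) (u : ℝ) :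
    0 ≤ rightRegularization X (u, b) :=
  -- a real `liminf` is an `sSup`, and the junk value `0` of an unbounded `sSup` is also `≥ 0`
  Real.sSup_nonneg'
    ⟨0, (Eventually.of_forall fun _ => h _ : ∀ᶠ n in atTop, 0 ≤ X (gridCeil n u) b), le_rfl⟩

end RightRegularization

lemma integral_exp_neg_mul_Ioi {a : ℝ} (ha : 0 < a) (c : ℝ) :
    ∫ u in Ioi c, Real.exp (-a * u) = Real.exp (-a * c) / a := by
  rw [integral_exp_mul_Ioi (neg_neg_of_pos ha), neg_div_neg_eq]

lemma integral_exp_neg_mul_of_isUpperSet {S : Set ℝ} (hS : IsUpperSet S) (hne : S.Nonempty)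
    (hbdd : BddBelow S) {a : ℝ} (ha : 0 < a) :
    ∫ u in S, Real.exp (-a * u) = Real.exp (-a * sInf S) / a := by
  set τ := sInf S
  have hIoi : Ioi τ ⊆ S := fun u hu => by
    obtain ⟨v, hv, hvu⟩ := exists_lt_of_csInf_lt hne hu
    exact hS hvu.le hv
  rcases mem_Ici_Ioi_of_subset_of_subset hIoi (fun u hu => csInf_le hbdd hu) with h | h
  · rw [h, integral_Ici_eq_integral_Ioi, integral_exp_neg_mul_Ioi ha]
  · rw [mem_singleton_iff.1 h, integral_exp_neg_mul_Ioi ha]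

lemma integral_Ioi_indicator_Iio_exp_neg_mul {s : ℝ} (hs : 0 < s) {d : ℝ} (hd : 0 ≤ d) :
    ∫ t in Ioi 0, (Iio d).indicator (fun t => Real.exp (-s * t)) t
      = (1 - Real.exp (-s * d)) / s := by
  rw [setIntegral_indicator measurableSet_Iio, Ioi_inter_Iio, ← integral_Ioc_eq_integral_Ioo,
    ← intervalIntegral.integral_of_le hd,
    ← intervalIntegral.integral_Ioi_sub_Ioi (exp_neg_integrableOn_Ioi 0 hs) hd,
    integral_exp_neg_mul_Ioi hs, integral_exp_neg_mul_Ioi hs, mul_zero, Real.exp_zero, sub_div]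

lemma integral_exp_neg_mul_mul_one_sub_exp {a c : ℝ} (ha : 0 < a) (hac : 0 < a + c) :
    ∫ u in Ioi 0, Real.exp (-a * u) * (1 - Real.exp (-u * c)) = c / (a * (a + c)) := by
  have hexp : ∀ u : ℝ, Real.exp (-a * u) * (1 - Real.exp (-u * c))
      = Real.exp (-a * u) - Real.exp (-(a + c) * u) := by
    intro u
    rw [mul_one_sub, ← Real.exp_add]
    ring_nf
  simp_rw [hexp]
  rw [integral_sub (exp_neg_integrableOn_Ioi 0 ha) (exp_neg_integrableOn_Ioi 0 hac),
    integral_exp_neg_mul_Ioi ha, integral_exp_neg_mul_Ioi hac, mul_zero, mul_zero, Real.exp_zero]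
  field_simp
  ring

lemma exp_neg_mul_sInf_eq {f : ℝ → ℝ} (hf : MonotoneOn f (Ioi 0)) {t : ℝ}
    (hne : ∃ u > 0, t < f u) {a : ℝ} (ha : 0 < a) :
    Real.exp (-a * sInf {u | 0 < u ∧ t < f u})
      = a * ∫ u in Ioi 0, {u | t < f u}.indicator (fun u => Real.exp (-a * u)) u := by
  set S := {u | 0 < u ∧ t < f u}
  have hS : IsUpperSet S := fun u v huv hu =>
    ⟨hu.1.trans_le huv, hu.2.trans_le (hf hu.1 (hu.1.trans_le huv) huv)⟩
  have hrestrict : ∫ u in Ioi 0, {u | t < f u}.indicator (fun u => Real.exp (-a * u)) u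
      = ∫ u in S, Real.exp (-a * u) := by
    rw [← integral_indicator measurableSet_Ioi, indicator_indicator]
    exact integral_indicator hS.ordConnected.measurableSet
  obtain ⟨u, hu, htu⟩ := hne
  rw [hrestrict, integral_exp_neg_mul_of_isUpperSet hS ⟨u, hu, htu⟩ ⟨0, fun v hv => hv.1.le⟩ ha,
    mul_div_cancel₀ _ ha.ne']

lemma norm_indicator_exp_neg_mul_le (S : Set ℝ) (a u : ℝ) :
    ‖S.indicator (fun u => Real.exp (-a * u)) u‖ ≤ Real.exp (-a * u) :=
  (norm_indicator_le_norm_self _ _).trans_eq (Real.norm_of_nonneg (Real.exp_pos _).le)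

section DiscountedTime

variable {Ω : Type*} {X : ℝ × Ω → ℝ}

noncomputable def discountedTimeAbove (X : ℝ × Ω → ℝ) (a t : ℝ) (ω : Ω) : ℝ :=
  ∫ u in Ioi 0, {u | t < X (u, ω)}.indicator (fun u => Real.exp (-a * u)) u

lemma exp_neg_mul_sInf_eq_discountedTimeAbove {f : ℝ → ℝ} (hf : StrictMonoOn f (Ici 0))
    (hf_unbdd : ∀ M, ∃ u, 0 ≤ u ∧ M < f u) {ω : Ω} (hXf : ∀ u > 0, X (u, ω) = f u) (t : ℝ)
    {a : ℝ} (ha : 0 < a) :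
    Real.exp (-a * sInf {u | 0 < u ∧ t < f u}) = a * discountedTimeAbove X a t ω := by
  obtain ⟨u, hu, htu⟩ := hf_unbdd t
  have hne : ∃ v > 0, t < f v :=
    ⟨u + 1, by linarith, htu.trans (hf hu (mem_Ici.2 (by linarith)) (lt_add_one u))⟩
  rw [exp_neg_mul_sInf_eq (hf.monotoneOn.mono Ioi_subset_Ici_self) hne ha, discountedTimeAbove]
  congr 1
  refine setIntegral_congr_fun measurableSet_Ioi fun v hv => ?_
  simp [indicator_apply, hXf v hv]

variable [MeasurableSpace Ω]

lemma measurable_indicator_lt_exp_neg_mul (hX : Measurable X) (a : ℝ) :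
    Measurable fun q : ℝ × Ω × ℝ =>
      {u | q.1 < X (u, q.2.1)}.indicator (fun u => Real.exp (-a * u)) q.2.2 :=
  (Real.measurable_exp.comp (measurable_snd.snd.const_mul (-a))).indicator
    (measurableSet_lt measurable_fst (hX.comp (measurable_snd.snd.prodMk measurable_snd.fst)))

lemma integrable_indicator_lt_exp_neg_mul (P : Measure Ω) [IsFiniteMeasure P] (hX : Measurable X)
    {a : ℝ} (ha : 0 < a) (t : ℝ) :
    Integrable (fun p : Ω × ℝ => {u | t < X (u, p.1)}.indicator (fun u => Real.exp (-a * u)) p.2)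
      (P.prod (volume.restrict (Ioi 0))) :=
  ((integrable_const 1).mul_prod (exp_neg_integrableOn_Ioi 0 ha)).mono'
    ((measurable_indicator_lt_exp_neg_mul hX a).comp measurable_prodMk_left).aestronglyMeasurable
    (Eventually.of_forall fun _ => (norm_indicator_exp_neg_mul_le _ _ _).trans_eq (one_mul _).symm)

lemma integrable_exp_neg_mul_indicator_lt (P : Measure Ω) [IsFiniteMeasure P] (hX : Measurable X)
    {a s : ℝ} (ha : 0 < a) (hs : 0 < s) :
    Integrable (fun q : ℝ × Ω × ℝ => Real.exp (-s * q.1) *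
        {u | q.1 < X (u, q.2.1)}.indicator (fun u => Real.exp (-a * u)) q.2.2)
      ((volume.restrict (Ioi 0)).prod (P.prod (volume.restrict (Ioi 0)))) :=
  ((exp_neg_integrableOn_Ioi 0 hs).mul_prod
    ((integrable_const 1).mul_prod (exp_neg_integrableOn_Ioi 0 ha))).mono'
    ((Real.measurable_exp.comp (measurable_fst.const_mul (-s))).mul
      (measurable_indicator_lt_exp_neg_mul hX a)).aestronglyMeasurable
    (Eventually.of_forall fun q => by
      rw [norm_mul, Real.norm_of_nonneg (Real.exp_pos _).le, one_mul]
      exact mul_le_mul_of_nonneg_left (norm_indicator_exp_neg_mul_le _ _ _) (Real.exp_pos _).le)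

lemma integrable_exp_neg_mul_of_nonneg (P : Measure Ω) [IsFiniteMeasure P] {Y : Ω → ℝ}
    (hY : Measurable Y) (hY0 : ∀ ω, 0 ≤ Y ω) {s : ℝ} (hs : 0 ≤ s) :
    Integrable (fun ω => Real.exp (-s * Y ω)) P :=
  Integrable.of_bound (Real.measurable_exp.comp (hY.const_mul (-s))).aestronglyMeasurable 1
    (Eventually.of_forall fun ω => by
      rw [Real.norm_of_nonneg (Real.exp_pos _).le, Real.exp_le_one_iff]
      exact mul_nonpos_of_nonpos_of_nonneg (neg_nonpos.2 hs) (hY0 ω))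

lemma laplace_discountedTimeAbove (P : Measure Ω) [IsProbabilityMeasure P]
    (hX : Measurable X) (hX0 : ∀ p, 0 ≤ X p) {a s c : ℝ} (ha : 0 < a) (hs : 0 < s)
    (hac : 0 < a + c) (hLap : ∀ u > 0, ∫ ω, Real.exp (-s * X (u, ω)) ∂P = Real.exp (-u * c)) :
    IntegrableOn (fun t => Real.exp (-s * t) * ∫ ω, discountedTimeAbove X a t ω ∂P) (Ioi 0) ∧
      ∫ t in Ioi 0, Real.exp (-s * t) * ∫ ω, discountedTimeAbove X a t ω ∂P
        = c / (s * a * (a + c)) := by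
  set ν := volume.restrict (Ioi (0 : ℝ))
  set G : ℝ → Ω × ℝ → ℝ := fun t p =>
    {u | t < X (u, p.1)}.indicator (fun u => Real.exp (-a * u)) p.2
  set H : ℝ → Ω × ℝ → ℝ := fun t p => Real.exp (-s * t) * G t p
  have hHint : Integrable (Function.uncurry H) (ν.prod (P.prod ν)) :=
    integrable_exp_neg_mul_indicator_lt P hX ha hs
  have hsection : ∀ t, Real.exp (-s * t) * ∫ ω, discountedTimeAbove X a t ω ∂P
      = ∫ p, H t p ∂(P.prod ν) := fun t => by
    rw [integral_const_mul, integral_prod _ (integrable_indicator_lt_exp_neg_mul P hX ha t)]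
    rfl
  have htime : ∀ p : Ω × ℝ,
      ∫ t, H t p ∂ν = Real.exp (-a * p.2) * ((1 - Real.exp (-s * X (p.2, p.1))) / s) := by
    intro p
    have hswap : ∀ t, H t p
        = Real.exp (-a * p.2) * (Iio (X (p.2, p.1))).indicator (fun t => Real.exp (-s * t)) t := by
      intro t
      by_cases h : t < X (p.2, p.1) <;> simp [H, G, h, mul_comm]
    simp_rw [hswap]
    rw [integral_const_mul, integral_Ioi_indicator_Iio_exp_neg_mul hs (hX0 _)]
  have hspace : ∀ u ∈ Ioi (0 : ℝ),
      ∫ ω, Real.exp (-a * u) * ((1 - Real.exp (-s * X (u, ω))) / s) ∂P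
        = Real.exp (-a * u) * (1 - Real.exp (-u * c)) / s := fun u hu => by
    have hint : Integrable (fun ω => Real.exp (-s * X (u, ω))) P :=
      integrable_exp_neg_mul_of_nonneg P (hX.comp measurable_prodMk_left) (hX0 ⟨u, ·⟩) hs.le
    rw [integral_const_mul, integral_div, integral_sub (integrable_const 1) hint, hLap u hu]
    simp [mul_div_assoc]
  refine ⟨hHint.integral_prod_left.congr (Eventually.of_forall fun t => (hsection t).symm), ?_⟩
  calc ∫ t in Ioi 0, Real.exp (-s * t) * ∫ ω, discountedTimeAbove X a t ω ∂P
      = ∫ t, ∫ p, H t p ∂(P.prod ν) ∂ν := integral_congr_ae (Eventually.of_forall hsection)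
    _ = ∫ p, ∫ t, H t p ∂ν ∂(P.prod ν) := integral_integral_swap hHint
    _ = ∫ p, Real.exp (-a * p.2) * ((1 - Real.exp (-s * X (p.2, p.1))) / s) ∂(P.prod ν) :=
      integral_congr_ae (Eventually.of_forall htime)
    _ = ∫ u in Ioi 0, ∫ ω, Real.exp (-a * u) * ((1 - Real.exp (-s * X (u, ω))) / s) ∂P :=
      integral_prod_symm _ (hHint.integral_prod_right.congr (Eventually.of_forall htime))
    _ = ∫ u in Ioi 0, Real.exp (-a * u) * (1 - Real.exp (-u * c)) / s :=
      setIntegral_congr_fun measurableSet_Ioi hspace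
    _ = c / (s * a * (a + c)) := by
      rw [integral_div, integral_exp_neg_mul_mul_one_sub_exp ha hac]
      field_simp

end DiscountedTime

theorem stmt_0_general
    {Ω : Type*} [MeasurableSpace Ω] (P : Measure Ω) [IsProbabilityMeasure P]
    (D : ℝ → Ω → ℝ) (φ : ℝ → ℝ) (E : ℝ → Ω → ℝ)
    (hDmeas : ∀ u : ℝ, Measurable (D u))
    (hDnonneg : ∀ u ω, 0 ≤ D u ω)
    (hDpath : ∀ᵐ ω ∂P,
      (∀ u : ℝ, 0 ≤ u → ContinuousWithinAt (fun v => D v ω) (Set.Ici u) u) ∧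
      StrictMonoOn (fun u => D u ω) (Set.Ici (0 : ℝ)) ∧
      (∀ M : ℝ, ∃ u : ℝ, 0 ≤ u ∧ M < D u ω))
    (hφpos : ∀ l : ℝ, 0 < l → 0 < φ l)
    (hLap : ∀ u : ℝ, 0 ≤ u → ∀ l : ℝ, 0 < l →
      ∫ ω, Real.exp (-l * D u ω) ∂P = Real.exp (-u * φ l))
    (hE : ∀ t ω, E t ω = sInf {u : ℝ | 0 < u ∧ t < D u ω})
    (a s : ℝ) (ha : 0 < a) (hs : 0 < s) :
    IntegrableOn (fun t => Real.exp (-s * t) * ∫ ω, Real.exp (-a * E t ω) ∂P)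
      (Set.Ioi (0 : ℝ)) ∧
    ∫ t in Set.Ioi (0 : ℝ), Real.exp (-s * t) * ∫ ω, Real.exp (-a * E t ω) ∂P
      = φ s / (s * (φ s + a)) := by
  set X := rightRegularization D
  have hXD : ∀ᵐ ω ∂P, ∀ u > 0, X (u, ω) = D u ω :=
    hDpath.mono fun ω hω u hu => rightRegularization_eq (hω.1 u hu.le)
  have hmean : ∀ t, ∫ ω, Real.exp (-a * E t ω) ∂P = a * ∫ ω, discountedTimeAbove X a t ω ∂P := by
    intro t
    rw [← integral_const_mul]
    refine integral_congr_ae ?_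
    filter_upwards [hDpath, hXD] with ω hω hXω
    rw [hE, exp_neg_mul_sInf_eq_discountedTimeAbove hω.2.1 hω.2.2 hXω t ha]
  have hLapX : ∀ u > 0, ∫ ω, Real.exp (-s * X (u, ω)) ∂P = Real.exp (-u * φ s) := fun u hu => by
    rw [← hLap u hu.le s hs]
    refine integral_congr_ae ?_
    filter_upwards [hXD] with ω hω
    rw [hω u hu]
  obtain ⟨hint, hval⟩ := laplace_discountedTimeAbove P (measurable_rightRegularization hDmeas)
    (fun p => rightRegularization_nonneg (hDnonneg · p.2) p.1) ha hs
    (add_pos ha (hφpos s hs)) hLapX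
  simp_rw [hmean, mul_left_comm _ a]
  refine ⟨hint.const_mul a, ?_⟩
  rw [integral_const_mul, hval]
  field_simp
  ring

/-- Double Laplace transform of an inverse subordinator:
for `a > 0`, `s > 0`, the Laplace transform of `t ↦ E[exp(-a E_t)]` exists and equals
`φ(s) / (s (φ(s) + a))`. -/
theorem stmt_0
    {Ω : Type*} [MeasurableSpace Ω] (P : Measure Ω) [IsProbabilityMeasure P]
    (D : ℝ → Ω → ℝ) (φ : ℝ → ℝ) (E : ℝ → Ω → ℝ)
    (hDmeas : ∀ u : ℝ, Measurable (D u))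
    (hDnonneg : ∀ u ω, 0 ≤ D u ω)
    (hD0 : ∀ᵐ ω ∂P, D 0 ω = 0)
    (hDpath : ∀ᵐ ω ∂P,
      (∀ u : ℝ, 0 ≤ u → ContinuousWithinAt (fun v => D v ω) (Set.Ici u) u) ∧
      StrictMonoOn (fun u => D u ω) (Set.Ici (0 : ℝ)) ∧
      (∀ M : ℝ, ∃ u : ℝ, 0 ≤ u ∧ M < D u ω))
    (hφpos : ∀ l : ℝ, 0 < l → 0 < φ l)
    (hφmono : StrictMonoOn φ (Set.Ioi (0 : ℝ)))
    (hφ0 : Tendsto φ (nhdsWithin 0 (Set.Ioi 0)) (nhds 0))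
    (hφtop : Tendsto φ atTop atTop)
    (hLap : ∀ u : ℝ, 0 ≤ u → ∀ l : ℝ, 0 < l →
      ∫ ω, Real.exp (-l * D u ω) ∂P = Real.exp (-u * φ l))
    (hE : ∀ t ω, E t ω = sInf {u : ℝ | 0 < u ∧ t < D u ω})
    (hEmeas : ∀ t : ℝ, Measurable (E t))
    (a s : ℝ) (ha : 0 < a) (hs : 0 < s) :
    IntegrableOn (fun t => Real.exp (-s * t) * ∫ ω, Real.exp (-a * E t ω) ∂P)
      (Set.Ioi (0 : ℝ)) ∧
    ∫ t in Set.Ioi (0 : ℝ), Real.exp (-s * t) * ∫ ω, Real.exp (-a * E t ω) ∂P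
      = φ s / (s * (φ s + a)) :=
  stmt_0_general P D φ E hDmeas hDnonneg hDpath hφpos hLap hE a s ha hs
end

section
/- Suppose the Laplace exponent φ is regularly varying at ∞ with index β ∈ (0,1). Then for every α ∈ (0,2) and all δ_1, δ_2 > 0, E[f_α(E_t) ; E_t ≤ δ_1] ~ E[f_α(E_t) ; E_t ≤ δ_2] as t ↓ 0, where E[f_α(E_t) ; E_t ≤ δ] denotes the expectation of f_α(E_t) restricted to the event {0 < E_t ≤ δ}. -/
/-!
Everything comes from the Laplace transform of `D v` at `λ = 1 / t`. On the one hand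
`P(E t > v) ≤ P(D v ≤ t) ≤ e ^ (1 - v φ(1/t))` (Chernoff), so the law of `E t` has exponentially
thin tails on the scale `1 / φ(1/t)`. On the other hand, for `v = 1 / (2 φ(1/t))`,
`P(E t ≥ v) ≥ P(D v ≤ t) ≥ E[e ^ (-D v / t)] - e ^ (-1) = e ^ (-1/2) - e ^ (-1)`, so that law
keeps a fixed amount of mass above that scale. Since `fα x ≥ x` near `0`, the truncated
expectation at level `δ` is therefore at least of order `1 / φ(1/t)`, while raising the level
from `δ` to `δ'` changes it by `O(e ^ (-δ φ(1/t)))`. As `φ(1/t) → ∞`, the ratio tends to `1`.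
-/

open MeasureTheory Filter Set

noncomputable def falpha (α t : ℝ) : ℝ :=
  if 1 < α then t ^ (1 / α) else if α = 1 then t * Real.log (1 / t) else t

open Real ProbabilityTheory Topology

lemma measurable_falpha (α : ℝ) : Measurable (falpha α) := by
  unfold falpha
  split_ifs <;> fun_prop

lemma abs_falpha_le {α x : ℝ} (hx : 0 < x) : |falpha α x| ≤ x ^ 2 + 1 := by
  unfold falpha
  split_ifs with h1 h2
  · rw [abs_of_nonneg (rpow_nonneg hx.le _)]
    rcases le_total x 1 with hx1 | hx1
    · nlinarith [rpow_le_one hx.le hx1 (one_div_pos.2 (zero_lt_one.trans h1)).le]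
    · have : x ^ (1 / α) ≤ x ^ (1 : ℝ) :=
        rpow_le_rpow_of_exponent_le hx1 ((div_le_one (zero_lt_one.trans h1)).2 h1.le)
      rw [rpow_one] at this
      nlinarith
  · rw [one_div, log_inv, mul_neg, abs_neg, mul_comm]
    rcases le_total x 1 with hx1 | hx1
    · nlinarith [abs_log_mul_self_lt x hx hx1]
    · rw [abs_of_nonneg (mul_nonneg (log_nonneg hx1) hx.le)]
      nlinarith [log_le_sub_one_of_pos hx]
  · rw [abs_of_pos hx]
    nlinarith

lemma eventually_le_falpha (α : ℝ) : ∀ᶠ x in 𝓝[>] 0, x ≤ falpha α x := by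
  filter_upwards [Ioc_mem_nhdsGT (exp_pos (-1))] with x ⟨hx, hxe⟩
  have hx1 : x ≤ 1 := hxe.trans (exp_le_one_iff.2 (by norm_num))
  unfold falpha
  split_ifs with h1 h2
  · calc x = x ^ (1 : ℝ) := (rpow_one x).symm
      _ ≤ x ^ (1 / α) := rpow_le_rpow_of_exponent_ge hx hx1
          ((div_le_one (zero_lt_one.trans h1)).2 h1.le)
  · have : 1 ≤ log (1 / x) := by
      rw [one_div, log_inv, le_neg, ← log_exp (-1)]
      exact log_le_log hx hxe
    nlinarith
  · exact le_rfl

lemma tendsto_one_add_mul_mul_exp_atTop (b : ℝ) {c : ℝ} (hc : 0 < c) :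
    Tendsto (fun y => (1 + b * y) * exp (1 - c * y)) atTop (𝓝 0) := by
  have h := ((tendsto_rpow_mul_exp_neg_mul_atTop_nhds_zero 0 c hc).add
    ((tendsto_rpow_mul_exp_neg_mul_atTop_nhds_zero 1 c hc).const_mul b)).const_mul (exp 1)
  simp only [rpow_zero, rpow_one, mul_zero, add_zero] at h
  refine h.congr fun y => ?_
  rw [sub_eq_add_neg, exp_add, ← neg_mul]
  ring

section SetIntegralIoc

variable {μ : Measure ℝ} {f : ℝ → ℝ}

lemma setIntegral_Ioc_add_setIntegral_Ioc {a b c : ℝ} (hab : a ≤ b) (hbc : b ≤ c)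
    (hf : IntegrableOn f (Ioc a c) μ) :
    ∫ x in Ioc a b, f x ∂μ + ∫ x in Ioc b c, f x ∂μ = ∫ x in Ioc a c, f x ∂μ := by
  rw [← Ioc_union_Ioc_eq_Ioc hab hbc] at hf ⊢
  exact (setIntegral_union (Ioc_disjoint_Ioc_of_le le_rfl) measurableSet_Ioc
    (hf.mono_set subset_union_left) (hf.mono_set subset_union_right)).symm

variable [IsFiniteMeasure μ]

lemma integrableOn_Ioc_of_abs_le (hf : Measurable f) {a b B : ℝ}
    (hB : ∀ x ∈ Ioc a b, |f x| ≤ B) : IntegrableOn f (Ioc a b) μ :=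
  .of_bound (measure_lt_top _ _) hf.aestronglyMeasurable B
    ((ae_restrict_iff' measurableSet_Ioc).2 (.of_forall hB))

lemma abs_setIntegral_Ioc_sub_le (hf : Measurable f) {B δ δ' : ℝ} (hδ : 0 < δ)
    (hδδ' : δ ≤ δ') (hB : ∀ x ∈ Ioc 0 δ', |f x| ≤ B) :
    |∫ x in Ioc 0 δ', f x ∂μ - ∫ x in Ioc 0 δ, f x ∂μ| ≤ B * μ.real (Ioi δ) := by
  have hB0 : 0 ≤ B := (abs_nonneg _).trans (hB δ' ⟨hδ.trans_le hδδ', le_rfl⟩)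
  rw [← setIntegral_Ioc_add_setIntegral_Ioc hδ.le hδδ' (integrableOn_Ioc_of_abs_le hf hB),
    add_sub_cancel_left]
  calc |∫ x in Ioc δ δ', f x ∂μ| ≤ B * μ.real (Ioc δ δ') :=
        norm_setIntegral_le_of_norm_le_const (measure_lt_top _ _)
          fun x hx => (Real.norm_eq_abs _).trans_le (hB x ⟨hδ.trans hx.1, hx.2⟩)
    _ ≤ B * μ.real (Ioi δ) :=
        mul_le_mul_of_nonneg_left (measureReal_mono Ioc_subset_Ioi_self) hB0

lemma le_setIntegral_Ioc_of_self_le (hf : Measurable f) {B c δ v : ℝ} (hv : 0 < v)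
    (hvc : v ≤ c) (hcδ : c ≤ δ) (hfc : ∀ x ∈ Ioc 0 c, x ≤ f x)
    (hB : ∀ x ∈ Ioc 0 δ, |f x| ≤ B) :
    v * μ.real (Ici v) - (v + B) * μ.real (Ioi c) ≤ ∫ x in Ioc 0 δ, f x ∂μ := by
  have hc : 0 < c := hv.trans_le hvc
  have hint := integrableOn_Ioc_of_abs_le (μ := μ) hf hB
  rw [← setIntegral_Ioc_add_setIntegral_Ioc hc.le hcδ hint]
  have hnear : v * μ.real (Icc v c) ≤ ∫ x in Ioc 0 c, f x ∂μ := by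
    have hintc := hint.mono_set (Ioc_subset_Ioc_right hcδ)
    calc v * μ.real (Icc v c) = ∫ _ in Icc v c, v ∂μ := by
          rw [setIntegral_const, smul_eq_mul, mul_comm]
      _ ≤ ∫ x in Icc v c, f x ∂μ :=
          setIntegral_mono_on (integrableOn_const (measure_ne_top _ _))
            (hintc.mono_set (Icc_subset_Ioc hv le_rfl)) measurableSet_Icc
            fun x hx => hx.1.trans (hfc x ⟨hv.trans_le hx.1, hx.2⟩)
      _ ≤ ∫ x in Ioc 0 c, f x ∂μ :=
          setIntegral_mono_set hintc
            ((ae_restrict_iff' measurableSet_Ioc).2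
              (.of_forall fun x hx => hx.1.le.trans (hfc x hx)))
            (Icc_subset_Ioc hv le_rfl).eventuallyLE
  have hfar : -(B * μ.real (Ioi c)) ≤ ∫ x in Ioc c δ, f x ∂μ := by
    have hB0 : 0 ≤ B := (abs_nonneg _).trans (hB c ⟨hc, hcδ⟩)
    have := norm_setIntegral_le_of_norm_le_const (μ := μ) (measure_lt_top _ (Ioc c δ))
      fun x hx => (Real.norm_eq_abs _).trans_le (hB x ⟨hc.trans hx.1, hx.2⟩)
    rw [Real.norm_eq_abs] at this
    have hmono : μ.real (Ioc c δ) ≤ μ.real (Ioi c) := measureReal_mono Ioc_subset_Ioi_self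
    linarith [mul_le_mul_of_nonneg_left hmono hB0, neg_abs_le (∫ x in Ioc c δ, f x ∂μ)]
  have hcover : μ.real (Ici v) ≤ μ.real (Icc v c) + μ.real (Ioi c) := by
    rw [← Icc_union_Ioi_eq_Ici hvc]
    exact measureReal_union_le _ _
  linarith [mul_le_mul_of_nonneg_left hcover hv.le]

lemma abs_setIntegral_Ioc_div_sub_one_le (hf : Measurable f) {B c δ δ' X q : ℝ} (hc : 0 < c)
    (hcδ : c ≤ δ) (hδδ' : δ ≤ δ') (hB : ∀ x ∈ Ioc 0 δ', |f x| ≤ B)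
    (hfc : ∀ x ∈ Ioc 0 c, x ≤ f x) (hcX : 1 ≤ 2 * c * X)
    (htail : ∀ v > 0, μ.real (Ioi v) ≤ exp (1 - v * X))
    (hbulk : q ≤ μ.real (Ici (1 / (2 * X))))
    (hq : (1 + 2 * B * X) * exp (1 - c * X) < q) :
    |(∫ x in Ioc 0 δ', f x ∂μ) / (∫ x in Ioc 0 δ, f x ∂μ) - 1| ≤
      (1 + 2 * B * X) * exp (1 - c * X) / (q - (1 + 2 * B * X) * exp (1 - c * X)) := by
  set g := (1 + 2 * B * X) * exp (1 - c * X)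
  have hδ : 0 < δ := hc.trans_le hcδ
  have hB0 : 0 ≤ B := (abs_nonneg _).trans (hB δ' ⟨hδ.trans_le hδδ', le_rfl⟩)
  have hX : 0 < X := by nlinarith
  have hv : 0 < 1 / (2 * X) := by positivity
  have hgq : 0 < q - g := sub_pos.2 hq
  have hlow : (q - g) / (2 * X) ≤ ∫ x in Ioc 0 δ, f x ∂μ := by
    calc (q - g) / (2 * X) = 1 / (2 * X) * q - (1 / (2 * X) + B) * exp (1 - c * X) := by
          simp only [g]
          field_simp
      _ ≤ 1 / (2 * X) * μ.real (Ici (1 / (2 * X))) - (1 / (2 * X) + B) * μ.real (Ioi c) := by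
          gcongr
          exact htail c hc
      _ ≤ ∫ x in Ioc 0 δ, f x ∂μ :=
          le_setIntegral_Ioc_of_self_le hf hv (by rw [div_le_iff₀ (by positivity)]; linarith)
            hcδ hfc fun x hx => hB x ⟨hx.1, hx.2.trans hδδ'⟩
  have hdiff : |∫ x in Ioc 0 δ', f x ∂μ - ∫ x in Ioc 0 δ, f x ∂μ| ≤ B * exp (1 - c * X) :=
    (abs_setIntegral_Ioc_sub_le hf hδ hδδ' hB).trans <| mul_le_mul_of_nonneg_left
      ((htail δ hδ).trans (exp_le_exp.2 (by nlinarith))) hB0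
  have hI : 0 < ∫ x in Ioc 0 δ, f x ∂μ := lt_of_lt_of_le (by positivity) hlow
  rw [div_sub_one hI.ne', abs_div, abs_of_pos hI]
  calc _ ≤ B * exp (1 - c * X) / ((q - g) / (2 * X)) :=
        div_le_div₀ (by positivity) hdiff (by positivity) hlow
    _ = 2 * B * X * exp (1 - c * X) / (q - g) := by
        field_simp
    _ ≤ g / (q - g) := by
        gcongr
        nlinarith [exp_pos (1 - c * X)]

end SetIntegralIoc

theorem tendsto_setIntegral_Ioc_div_of_tail {f : ℝ → ℝ} {ι : Type*} {l : Filter ι}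
    {μ : ι → Measure ℝ}
    [∀ i, IsFiniteMeasure (μ i)] (hf : Measurable f) {B δ δ' : ℝ} (hδ : 0 < δ)
    (hδδ' : δ ≤ δ') (hB : ∀ x ∈ Ioc 0 δ', |f x| ≤ B) (hf0 : ∀ᶠ x in 𝓝[>] 0, x ≤ f x)
    {X : ι → ℝ} (hX : Tendsto X l atTop) {q : ℝ} (hq : 0 < q)
    (htail : ∀ᶠ i in l, ∀ v > 0, (μ i).real (Ioi v) ≤ exp (1 - v * X i))
    (hbulk : ∀ᶠ i in l, q ≤ (μ i).real (Ici (1 / (2 * X i)))) :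
    Tendsto (fun i => (∫ x in Ioc 0 δ', f x ∂μ i) / ∫ x in Ioc 0 δ, f x ∂μ i) l (𝓝 1) := by
  obtain ⟨u, hu, hfu⟩ := mem_nhdsGT_iff_exists_Ioc_subset.1 hf0
  set c := min u δ
  have hc : 0 < c := lt_min hu hδ
  have hfc : ∀ x ∈ Ioc 0 c, x ≤ f x := fun x hx => hfu ⟨hx.1, hx.2.trans (min_le_left _ _)⟩
  set g := fun y => (1 + 2 * B * y) * exp (1 - c * y)
  have hg : Tendsto (fun i => g (X i)) l (𝓝 0) :=
    (tendsto_one_add_mul_mul_exp_atTop _ hc).comp hX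
  have hbound : ∀ᶠ i in l, ‖(∫ x in Ioc 0 δ', f x ∂μ i) / (∫ x in Ioc 0 δ, f x ∂μ i) - 1‖ ≤
      g (X i) / (q - g (X i)) := by
    filter_upwards [htail, hbulk, hX.eventually_ge_atTop (1 / (2 * c)),
      hg.eventually_lt_const hq] with i hti hbi hXc hgq
    refine abs_setIntegral_Ioc_div_sub_one_le hf hc (min_le_right _ _) hδδ' hB hfc ?_ hti hbi hgq
    rwa [div_le_iff₀ (by positivity), mul_comm] at hXc
  have hlim : Tendsto (fun i => g (X i) / (q - g (X i))) l (𝓝 0) := by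
    have := hg.div ((tendsto_const_nhds (x := q)).sub hg) (by rw [sub_zero]; exact hq.ne')
    rwa [zero_div] at this
  exact tendsto_sub_nhds_zero_iff.1 (squeeze_zero_norm' hbound hlim)

lemma apply_le_of_lt_sInf {d : ℝ → ℝ} {t v : ℝ} (hv : 0 < v)
    (h : v < sInf {u | 0 < u ∧ t < d u}) : d v ≤ t := by
  by_contra! hvt
  exact h.not_ge (csInf_le ⟨0, fun u hu => hu.1.le⟩ ⟨hv, hvt⟩)

lemma le_sInf_of_apply_le {d : ℝ → ℝ} (hd : StrictMonoOn d (Ici 0))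
    (hunb : ∀ M, ∃ u, 0 ≤ u ∧ M < d u) {t v : ℝ} (hv : 0 ≤ v) (h : d v ≤ t) :
    v ≤ sInf {u | 0 < u ∧ t < d u} := by
  obtain ⟨w, hw, hwt⟩ := hunb t
  have hw1 : (0 : ℝ) ≤ w + 1 := by linarith
  refine le_csInf ⟨w + 1, by linarith, hwt.trans (hd hw hw1 (by linarith))⟩ ?_
  rintro u ⟨hu, htu⟩
  by_contra! huv
  exact (hd hu.le hv huv).not_ge (h.trans htu.le)

lemma mgf_neg_le_measureReal_le_add_exp {Ω : Type*} [MeasurableSpace Ω] {P : Measure Ω}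
    [IsProbabilityMeasure P] {Y : Ω → ℝ} (hY : Measurable Y) (hY0 : ∀ ω, 0 ≤ Y ω) {lam : ℝ}
    (hlam : 0 ≤ lam) (h_int : Integrable (fun ω => exp (-lam * Y ω)) P) (t : ℝ) :
    mgf Y P (-lam) ≤ P.real {ω | Y ω ≤ t} + exp (-lam * t) := by
  have hs : MeasurableSet {ω | Y ω ≤ t} := measurableSet_le hY measurable_const
  have hpt : ∀ ω, exp (-lam * Y ω) ≤ {ω | Y ω ≤ t}.indicator 1 ω + exp (-lam * t) := by
    intro ω
    by_cases h : Y ω ≤ t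
    · rw [indicator_of_mem (show ω ∈ {ω | Y ω ≤ t} from h), Pi.one_apply]
      linarith [exp_pos (-lam * t), exp_le_one_iff.2 (by nlinarith [hY0 ω] : -lam * Y ω ≤ 0)]
    · rw [indicator_of_notMem (show ω ∉ {ω | Y ω ≤ t} from h), zero_add]
      exact exp_le_exp.2 (by nlinarith)
  calc mgf Y P (-lam) ≤ ∫ ω, ({ω | Y ω ≤ t}.indicator 1 ω + exp (-lam * t)) ∂P :=
        integral_mono h_int (((integrable_const 1).indicator hs).add (integrable_const _)) hpt
    _ = P.real {ω | Y ω ≤ t} + exp (-lam * t) := by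
        rw [integral_add ((integrable_const 1).indicator hs) (integrable_const _),
          integral_indicator_one hs, integral_const, probReal_univ, one_smul]

namespace InverseSubordinator

variable {Ω : Type*} [MeasurableSpace Ω] {P : Measure Ω} [IsProbabilityMeasure P]
  {D : ℝ → Ω → ℝ} {φ : ℝ → ℝ} {E : ℝ → Ω → ℝ} {t : ℝ}

lemma measureReal_map_Ioi_le (hEt : Measurable (E t))
    (hLap : ∀ u : ℝ, 0 ≤ u → ∀ l : ℝ, 0 < l → ∫ ω, exp (-l * D u ω) ∂P = exp (-u * φ l))
    (hE : ∀ ω, E t ω = sInf {u : ℝ | 0 < u ∧ t < D u ω}) (ht : 0 < t) {v : ℝ} (hv : 0 < v) :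
    (P.map (E t)).real (Ioi v) ≤ exp (1 - v * φ (1 / t)) := by
  have hLapv := hLap v hv.le (1 / t) (by positivity)
  have h_int : Integrable (fun ω => exp (-(1 / t) * D v ω)) P :=
    .of_integral_ne_zero (by rw [hLapv]; exact (exp_pos _).ne')
  calc (P.map (E t)).real (Ioi v) = P.real {ω | v < E t ω} :=
        map_measureReal_apply hEt measurableSet_Ioi
    _ ≤ P.real {ω | D v ω ≤ t} :=
        measureReal_mono fun ω hω => apply_le_of_lt_sInf hv (by rw [← hE ω]; exact hω)
    _ ≤ exp (-(-(1 / t)) * t) * mgf (D v) P (-(1 / t)) :=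
        measure_le_le_exp_mul_mgf t (by simp [ht.le]) h_int
    _ = exp (1 - v * φ (1 / t)) := by
        rw [mgf, hLapv, ← exp_add]
        field_simp
        ring_nf

lemma le_measureReal_map_Ici (hEt : Measurable (E t)) (hDmeas : ∀ u, Measurable (D u))
    (hDnonneg : ∀ u ω, 0 ≤ D u ω)
    (hpath : ∀ᵐ ω ∂P, StrictMonoOn (fun u => D u ω) (Ici 0) ∧ ∀ M, ∃ u, 0 ≤ u ∧ M < D u ω)
    (hLap : ∀ u : ℝ, 0 ≤ u → ∀ l : ℝ, 0 < l → ∫ ω, exp (-l * D u ω) ∂P = exp (-u * φ l))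
    (hE : ∀ ω, E t ω = sInf {u : ℝ | 0 < u ∧ t < D u ω}) (ht : 0 < t) (hφ : 0 < φ (1 / t)) :
    exp (-(1 / 2)) - exp (-1) ≤ (P.map (E t)).real (Ici (1 / (2 * φ (1 / t)))) := by
  set v := 1 / (2 * φ (1 / t))
  have hv : 0 < v := by positivity
  have hLapv := hLap v hv.le (1 / t) (by positivity)
  have h_int : Integrable (fun ω => exp (-(1 / t) * D v ω)) P :=
    .of_integral_ne_zero (by rw [hLapv]; exact (exp_pos _).ne')
  have hsub : {ω | D v ω ≤ t} ≤ᵐ[P] {ω | v ≤ E t ω} := by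
    filter_upwards [hpath] with ω ⟨hmono, hunb⟩ hvt
    show v ≤ E t ω
    rw [hE ω]
    exact le_sInf_of_apply_le hmono hunb hv.le hvt
  calc exp (-(1 / 2)) - exp (-1) = mgf (D v) P (-(1 / t)) - exp (-(1 / t) * t) := by
        rw [mgf, hLapv]
        simp only [v]
        congr 2 <;> field_simp
    _ ≤ P.real {ω | D v ω ≤ t} := by
        linarith [mgf_neg_le_measureReal_le_add_exp (hDmeas v) (hDnonneg v)
          (one_div_pos.2 ht).le h_int t]
    _ ≤ P.real {ω | v ≤ E t ω} := ENNReal.toReal_mono (measure_ne_top _ _) (measure_mono_ae hsub)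
    _ = (P.map (E t)).real (Ici v) := (map_measureReal_apply hEt measurableSet_Ici).symm

end InverseSubordinator

theorem stmt_13_general
    {Ω : Type*} [MeasurableSpace Ω] (P : Measure Ω) [IsProbabilityMeasure P]
    (D : ℝ → Ω → ℝ) (φ : ℝ → ℝ) (E : ℝ → Ω → ℝ)
    (hDmeas : ∀ u : ℝ, Measurable (D u))
    (hDnonneg : ∀ u ω, 0 ≤ D u ω)
    (hDpath : ∀ᵐ ω ∂P,
      (∀ u : ℝ, 0 ≤ u → ContinuousWithinAt (fun v => D v ω) (Set.Ici u) u) ∧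
      StrictMonoOn (fun u => D u ω) (Set.Ici (0 : ℝ)) ∧
      (∀ M : ℝ, ∃ u : ℝ, 0 ≤ u ∧ M < D u ω))
    (hφtop : Tendsto φ atTop atTop)
    (hLap : ∀ u : ℝ, 0 ≤ u → ∀ l : ℝ, 0 < l →
      ∫ ω, Real.exp (-l * D u ω) ∂P = Real.exp (-u * φ l))
    (hE : ∀ t ω, E t ω = sInf {u : ℝ | 0 < u ∧ t < D u ω})
    (hEmeas : ∀ t : ℝ, Measurable (E t))
    (α : ℝ) (δ₁ δ₂ : ℝ) (hδ₁ : 0 < δ₁) (hδ₂ : 0 < δ₂) :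
    Tendsto
      (fun t =>
        (∫ ω in {ω | 0 < E t ω ∧ E t ω ≤ δ₁}, falpha α (E t ω) ∂P) /
        (∫ ω in {ω | 0 < E t ω ∧ E t ω ≤ δ₂}, falpha α (E t ω) ∂P))
      (nhdsWithin 0 (Set.Ioi 0)) (nhds 1) := by
  have hX : Tendsto (fun t => φ (1 / t)) (𝓝[>] 0) atTop :=
    hφtop.comp ((tendsto_inv_nhdsGT_zero (𝕜 := ℝ)).congr fun t => (one_div t).symm)
  have hpos : ∀ᶠ t in 𝓝[>] (0 : ℝ), 0 < t := self_mem_nhdsWithin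
  have hlaw : ∀ t γ, ∫ x in Ioc 0 γ, falpha α x ∂P.map (E t) =
      ∫ ω in {ω | 0 < E t ω ∧ E t ω ≤ γ}, falpha α (E t ω) ∂P := fun t γ =>
    setIntegral_map measurableSet_Ioc (measurable_falpha α).aestronglyMeasurable
      (hEmeas t).aemeasurable
  have key : ∀ δ δ', 0 < δ → δ ≤ δ' → Tendsto (fun t =>
      (∫ ω in {ω | 0 < E t ω ∧ E t ω ≤ δ'}, falpha α (E t ω) ∂P) /
      (∫ ω in {ω | 0 < E t ω ∧ E t ω ≤ δ}, falpha α (E t ω) ∂P)) (𝓝[>] 0) (𝓝 1) := by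
    intro δ δ' hδ hδδ'
    simp only [← hlaw]
    refine tendsto_setIntegral_Ioc_div_of_tail (B := δ' ^ 2 + 1)
      (q := exp (-(1 / 2)) - exp (-1)) (measurable_falpha α) hδ hδδ'
      (fun x hx => (abs_falpha_le hx.1).trans (by nlinarith [hx.1, hx.2]))
      (eventually_le_falpha α) hX (sub_pos.2 (exp_lt_exp.2 (by norm_num))) ?_ ?_
    · filter_upwards [hpos] with t ht v hv
      exact InverseSubordinator.measureReal_map_Ioi_le (hEmeas t) hLap (hE t) ht hv
    · filter_upwards [hpos, hX.eventually_gt_atTop 0] with t ht hφt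
      exact InverseSubordinator.le_measureReal_map_Ici (hEmeas t) hDmeas hDnonneg
        (hDpath.mono fun ω h => h.2) hLap (hE t) ht hφt
  rcases le_total δ₁ δ₂ with h | h
  · simpa only [inv_div, inv_one] using (key δ₁ δ₂ hδ₁ h).inv₀ one_ne_zero
  · exact key δ₂ δ₁ hδ₂ h

/-- If `φ` is regularly varying at `∞` with index `β ∈ (0,1)`, then for every `α ∈ (0,2)`
and `δ₁, δ₂ > 0`, `E[fα(E_t) ; E_t ≤ δ₁] ~ E[fα(E_t) ; E_t ≤ δ₂]` as `t ↓ 0`. -/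
theorem stmt_13
    {Ω : Type*} [MeasurableSpace Ω] (P : Measure Ω) [IsProbabilityMeasure P]
    (D : ℝ → Ω → ℝ) (φ : ℝ → ℝ) (E : ℝ → Ω → ℝ)
    (hDmeas : ∀ u : ℝ, Measurable (D u))
    (hDnonneg : ∀ u ω, 0 ≤ D u ω)
    (hD0 : ∀ᵐ ω ∂P, D 0 ω = 0)
    (hDpath : ∀ᵐ ω ∂P,
      (∀ u : ℝ, 0 ≤ u → ContinuousWithinAt (fun v => D v ω) (Set.Ici u) u) ∧
      StrictMonoOn (fun u => D u ω) (Set.Ici (0 : ℝ)) ∧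
      (∀ M : ℝ, ∃ u : ℝ, 0 ≤ u ∧ M < D u ω))
    (hφpos : ∀ l : ℝ, 0 < l → 0 < φ l)
    (hφmono : StrictMonoOn φ (Set.Ioi (0 : ℝ)))
    (hφ0 : Tendsto φ (nhdsWithin 0 (Set.Ioi 0)) (nhds 0))
    (hφtop : Tendsto φ atTop atTop)
    (hLap : ∀ u : ℝ, 0 ≤ u → ∀ l : ℝ, 0 < l →
      ∫ ω, Real.exp (-l * D u ω) ∂P = Real.exp (-u * φ l))
    (hE : ∀ t ω, E t ω = sInf {u : ℝ | 0 < u ∧ t < D u ω})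
    (hEmeas : ∀ t : ℝ, Measurable (E t))
    (β : ℝ) (hβ0 : 0 < β) (hβ1 : β < 1)
    (hRV : ∀ a : ℝ, 0 < a →
      Tendsto (fun l => φ (a * l) / φ l) atTop (nhds (a ^ β)))
    (α : ℝ) (hα0 : 0 < α) (hα2 : α < 2) (δ₁ δ₂ : ℝ) (hδ₁ : 0 < δ₁) (hδ₂ : 0 < δ₂) :
    Tendsto
      (fun t =>
        (∫ ω in {ω | 0 < E t ω ∧ E t ω ≤ δ₁}, falpha α (E t ω) ∂P) /
        (∫ ω in {ω | 0 < E t ω ∧ E t ω ≤ δ₂}, falpha α (E t ω) ∂P))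
      (nhdsWithin 0 (Set.Ioi 0)) (nhds 1) :=
  stmt_13_general P D φ E hDmeas hDnonneg hDpath hφtop hLap hE hEmeas α δ₁ δ₂ hδ₁ hδ₂
end
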